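/- arXiv:1805.02366 — 3 statements merged into one kernel-verified Lean document; each statement's English description precedes it below -/
import Mathlib

section
/- If A is a finite hyperplane arrangement in the vector space F_q^l over a finite field F_q, then the number of points of F_q^l not lying on any hyperplane of A equals χ(A, q), the characteristic polynomial of A evaluated at q. -/
/-!
If A is a finite hyperplane arrangement in F_q^l, then the number of points of
F_q^l lying on no hyperplane of A equals χ(A, q).
-/

open scoped Classical

noncomputable section

variable {K : Type*} [Field K] {l : ℕ}

/-- `H` is an affine hyperplane: the zero locus of an affine map with nonzero linear part. -/
def IsHyperplane (H : AffineSubspace K (Fin l → K)) : Prop :=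
  ∃ f : (Fin l → K) →ᵃ[K] K, f.linear ≠ 0 ∧ (H : Set (Fin l → K)) = f ⁻¹' {0}

/-- The flats (nonempty intersections of subarrangements, intersected with the ambient flat
`V₀`) of the arrangement `A`. Taking `V₀ = ⊤` gives the usual intersection lattice. -/
def flats (V₀ : AffineSubspace K (Fin l → K)) (A : Finset (AffineSubspace K (Fin l → K))) :
    Finset (AffineSubspace K (Fin l → K)) :=
  (A.powerset.image fun B => V₀ ⊓ sInf (B : Set (AffineSubspace K (Fin l → K)))).filter
    fun X => (X : Set (Fin l → K)).Nonempty

/-- `μ` is the Möbius function of the intersection poset of `A` (ordered by reverse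
inclusion, with minimal element the ambient flat `V₀`): `μ V₀ = 1` and
`μ X = -∑_{Y <_L X} μ Y`, where `Y <_L X` means `X ⊊ Y` as subspaces. -/
def IsMobius (V₀ : AffineSubspace K (Fin l → K)) (A : Finset (AffineSubspace K (Fin l → K)))
    (μ : AffineSubspace K (Fin l → K) → ℤ) : Prop :=
  μ V₀ = 1 ∧ ∀ X ∈ flats V₀ A, X ≠ V₀ →
    μ X = -∑ Y ∈ (flats V₀ A).filter (fun Y => X < Y), μ Y

/-- The characteristic polynomial `χ(A,t) = ∑_{X ∈ L(A)} μ(X) t^{dim X}` evaluated at `t`. -/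
def charEval (V₀ : AffineSubspace K (Fin l → K)) (A : Finset (AffineSubspace K (Fin l → K)))
    (μ : AffineSubspace K (Fin l → K) → ℤ) (t : ℤ) : ℤ :=
  ∑ X ∈ flats V₀ A, μ X * t ^ (Module.finrank K X.direction)

lemma mem_flats {V₀ X : AffineSubspace K (Fin l → K)} {A : Finset (AffineSubspace K (Fin l → K))} :
    X ∈ flats V₀ A ↔
      (∃ B : Finset (AffineSubspace K (Fin l → K)), B ⊆ A ∧
        V₀ ⊓ sInf (B : Set (AffineSubspace K (Fin l → K))) = X) ∧
      (X : Set (Fin l → K)).Nonempty := by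
  simp [flats, Finset.mem_powerset]

lemma mem_sInf_affine {S : Set (AffineSubspace K (Fin l → K))} {x : Fin l → K} :
    x ∈ sInf S ↔ ∀ s ∈ S, x ∈ s := Set.mem_iInter₂

lemma card_affineSubspace [Fintype K] (X : AffineSubspace K (Fin l → K))
    (hX : (X : Set (Fin l → K)).Nonempty) :
    Nat.card X = Fintype.card K ^ Module.finrank K X.direction := by
  obtain ⟨x₀, hx₀⟩ := hX
  have e : X ≃ X.direction :=
    { toFun := fun y => ⟨y.1 -ᵥ x₀, X.vsub_mem_direction y.2 hx₀⟩
      invFun := fun v => ⟨v.1 +ᵥ x₀, AffineSubspace.vadd_mem_of_mem_direction v.2 hx₀⟩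
      left_inv := fun y => by ext; simp
      right_inv := fun v => by ext; simp }
  have : Fintype X.direction := Fintype.ofFinite _
  rw [Nat.card_congr e, Nat.card_eq_fintype_card, Module.card_eq_pow_finrank (K := K)]

theorem finite_field_point_count {K : Type*} [Field K] [Fintype K] {l : ℕ}
    (A : Finset (AffineSubspace K (Fin l → K))) (hA : ∀ H ∈ A, IsHyperplane H)
    (μ : AffineSubspace K (Fin l → K) → ℤ) (hμ : IsMobius ⊤ A μ) :
    (Nat.card {x : Fin l → K // ∀ H ∈ A, x ∉ H} : ℤ) =
      charEval ⊤ A μ (Fintype.card K) := by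
  classical
  obtain ⟨hμtop, hμrec⟩ := hμ
  set L := flats (⊤ : AffineSubspace K (Fin l → K)) A with hLdef
  have hZmem : (⊤ : AffineSubspace K (Fin l → K)) ∈ L := by
    rw [hLdef]
    exact mem_flats.mpr ⟨⟨∅, by simp, by simp⟩, ⟨0, by simp⟩⟩
  set F : (Fin l → K) → AffineSubspace K (Fin l → K) :=
    fun x => ⊤ ⊓ sInf ((A.filter fun H => x ∈ H : Finset _) : Set _) with hFdef
  have hxF : ∀ x, x ∈ F x := by
    intro x
    simp only [hFdef, AffineSubspace.mem_inf_iff]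
    refine ⟨trivial, mem_sInf_affine.mpr fun s hs => ?_⟩
    simp only [Finset.coe_filter, Set.mem_setOf_eq] at hs
    exact hs.2
  have hFmem : ∀ x, F x ∈ L := by
    intro x
    rw [hLdef]
    exact mem_flats.mpr ⟨⟨A.filter fun H => x ∈ H, Finset.filter_subset _ _, rfl⟩, ⟨x, hxF x⟩⟩
  have hmemX : ∀ x, ∀ X ∈ L, (x ∈ X ↔ F x ≤ X) := by
    intro x X hX
    constructor
    · intro hx
      rw [hLdef] at hX
      obtain ⟨⟨B, hB, rfl⟩, -⟩ := mem_flats.mp hX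
      refine le_inf le_top (le_trans inf_le_right (sInf_le_sInf ?_))
      intro s hs
      simp only [Finset.mem_coe, Finset.coe_filter, Set.mem_setOf_eq] at *
      refine ⟨hB hs, ?_⟩
      have := (AffineSubspace.mem_inf_iff _ _ _).mp hx
      exact mem_sInf_affine.mp this.2 s (by simpa using hs)
    · intro h; exact h (hxF x)
  have hFtop : ∀ x, (F x = ⊤ ↔ ∀ H ∈ A, x ∉ H) := by
    intro x
    constructor
    · intro h H hH hx
      obtain ⟨f, hf, hHf⟩ := hA H hH
      obtain ⟨v, hv⟩ : ∃ v, f.linear v ≠ 0 := by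
        by_contra hc
        push_neg at hc
        exact hf (LinearMap.ext hc)
      have hle : F x ≤ H := by
        refine le_trans inf_le_right (sInf_le ?_)
        simp only [Finset.mem_coe, Finset.mem_filter]
        exact ⟨hH, hx⟩
      rw [h, top_le_iff] at hle
      have hvx : (v +ᵥ x) ∈ H := hle ▸ AffineSubspace.mem_top _ _ _
      have hx0 : f x = 0 := by
        have hxs : x ∈ (H : Set (Fin l → K)) := hx
        rw [hHf] at hxs; simpa using hxs
      have hvx0 : f (v +ᵥ x) = 0 := by
        have hm : (v +ᵥ x) ∈ (H : Set (Fin l → K)) := hvx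
        rw [hHf] at hm; simpa using hm
      rw [f.map_vadd, hx0] at hvx0
      simp only [vadd_eq_add, add_zero] at hvx0
      exact hv hvx0
    · intro h
      have hempty : A.filter (fun H => x ∈ H) = ∅ := by
        rw [Finset.filter_eq_empty_iff]
        exact fun {H} hH => h H hH
      simp only [hFdef]
      rw [hempty]
      simp
  have hM : ∀ Z ∈ L, (∑ X ∈ L.filter (fun X => Z ≤ X), μ X)
      = if Z = ⊤ then 1 else 0 := by
    intro Z hZ
    by_cases hZt : Z = (⊤ : AffineSubspace K (Fin l → K))
    · subst hZt
      have hfil : L.filter (fun X => (⊤ : AffineSubspace K (Fin l → K)) ≤ X) = {⊤} := by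
        ext X
        simp only [Finset.mem_filter, Finset.mem_singleton, top_le_iff]
        exact ⟨fun h => h.2, fun h => by subst h; exact ⟨hZmem, rfl⟩⟩
      rw [hfil]; simpa using hμtop
    · have hsplit : L.filter (fun X => Z ≤ X) = insert Z (L.filter (fun X => Z < X)) := by
        ext X
        simp only [Finset.mem_filter, Finset.mem_insert]
        constructor
        · rintro ⟨hXL, hle⟩
          rcases lt_or_eq_of_le hle with h | h
          · exact Or.inr ⟨hXL, h⟩
          · exact Or.inl h.symm
        · rintro (rfl | ⟨hXL, hlt⟩)
          · exact ⟨hZ, le_rfl⟩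
          · exact ⟨hXL, le_of_lt hlt⟩
      rw [hsplit, Finset.sum_insert (by simp), hμrec Z hZ hZt, if_neg hZt]
      ring
  have hq : ∀ X ∈ L, ((Fintype.card K : ℤ) ^ Module.finrank K X.direction)
      = ((Finset.univ.filter (fun x => x ∈ X)).card : ℤ) := by
    intro X hX
    rw [hLdef] at hX
    have hc := card_affineSubspace X (mem_flats.mp hX).2
    rw [Nat.card_eq_fintype_card, Fintype.card_subtype] at hc
    exact_mod_cast hc.symm
  rw [charEval]
  calc (Nat.card {x : Fin l → K // ∀ H ∈ A, x ∉ H} : ℤ)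
      = ∑ x : Fin l → K, (if F x = ⊤ then (1:ℤ) else 0) := by
        rw [Nat.card_eq_fintype_card, Fintype.card_subtype, Finset.sum_boole]
        exact_mod_cast congrArg Finset.card (Finset.filter_congr (s := Finset.univ) fun x _ => (hFtop x).symm)
    _ = ∑ x : Fin l → K, ∑ X ∈ L.filter (fun X => F x ≤ X), μ X := by
        refine Finset.sum_congr rfl fun x _ => ?_
        rw [hM (F x) (hFmem x)]
    _ = ∑ x : Fin l → K, ∑ X ∈ L, (if x ∈ X then μ X else 0) := by
        refine Finset.sum_congr rfl fun x _ => ?_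
        rw [Finset.sum_filter]
        exact Finset.sum_congr rfl fun X hX => by simp [hmemX x X hX]
    _ = ∑ X ∈ L, ∑ x : Fin l → K, (if x ∈ X then μ X else 0) := Finset.sum_comm
    _ = ∑ X ∈ L, μ X * (Fintype.card K : ℤ) ^ Module.finrank K X.direction := by
        refine Finset.sum_congr rfl fun X hX => ?_
        rw [hq X hX, Finset.sum_ite, Finset.sum_const, Finset.sum_const_zero, add_zero,
          nsmul_eq_mul, mul_comm]

end
end

section
/- (Saito's criterion) Let A be a central arrangement of n hyperplanes in K^l with Q = α_1 ⋯ α_n, and let δ_1, ..., δ_l ∈ D(A). If det(δ_i(x_j)) = c·Q for some nonzero constant c ∈ K, then δ_1, ..., δ_l form a free S-basis of D(A), i.e., D(A) = S·δ_1 ⊕ ⋯ ⊕ S·δ_l. -/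
noncomputable section

variable {K : Type*} [Field K] {l n : ℕ}

/-- The linear form with coefficient vector `a`. -/
def lin (a : Fin l → K) : MvPolynomial (Fin l) K :=
  ∑ j, MvPolynomial.C (a j) * MvPolynomial.X j

/-- The polynomial vector field `δ = ∑_j f_j ∂_{x_j}` (given by its coefficient vector
`f`) applied to a polynomial `g`. -/
def derApp (f : Fin l → MvPolynomial (Fin l) K) (g : MvPolynomial (Fin l) K) :
    MvPolynomial (Fin l) K :=
  ∑ j, f j * MvPolynomial.pderiv j g

/-- The vector field with coefficient vector `f` is logarithmic for the central
arrangement with defining linear forms `α_k`: `δ(α_k) ∈ (α_k) S` for all `k`. -/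
def IsLogDer (α : Fin n → Fin l → K) (f : Fin l → MvPolynomial (Fin l) K) : Prop :=
  ∀ k, lin (α k) ∣ derApp f (lin (α k))

/-- The `α_k` are the defining forms of a central arrangement of `n` distinct
hyperplanes in `K^l`: they are nonzero and pairwise non-proportional. -/
def IsArrangement (α : Fin n → Fin l → K) : Prop :=
  (∀ k, α k ≠ 0) ∧ ∀ k k', k ≠ k' → ∀ c : K, α k' ≠ c • α k

/-! Each linear form `α_k` is irreducible in the UFD `S`, and non-proportional forms are
coprime. Replacing a row of `M = (δ_i(x_j))` by a logarithmic field `f` yields a matrix all of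
whose rows are logarithmic, so its determinant is divisible by every `α_k` (combine the columns
with the coefficients of `α_k`), hence by `Q`, hence by `det M = c Q`. By Cramer's rule the
coefficients of `f` in the basis `δ_i` are these determinants divided by `det M`, so they are
polynomials; they are unique because `det M ≠ 0`. -/

open MvPolynomial Matrix

namespace Matrix

variable {R ι : Type*} [CommRing R] [Fintype ι] [DecidableEq ι]

theorem dvd_det_of_dvd_mulVec {N : Matrix ι ι R} {w : ι → R} {j : ι} (hw : IsUnit (w j))
    {p : R} (h : ∀ i, p ∣ (N *ᵥ w) i) : p ∣ N.det := by
  choose q hq using h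
  have hcol : (fun k => ∑ i, w i • N k i) = p • q := by
    funext k
    simp only [Pi.smul_apply, smul_eq_mul, ← hq, mulVec, dotProduct, mul_comm]
  have key := det_updateCol_sum N j w
  rw [hcol, det_updateCol_smul, smul_eq_mul] at key
  exact hw.dvd_mul_left.mp ⟨_, key.symm⟩

theorem existsUnique_vecMul_eq_of_det_dvd [IsDomain R] {M : Matrix ι ι R} (hM : M.det ≠ 0)
    {f : ι → R} (h : ∀ i, M.det ∣ (M.updateRow i f).det) : ∃! g : ι → R, g ᵥ* M = f := by
  choose g hg using h
  have hcramer : Mᵀ.cramer f = M.det • g := by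
    funext i
    rw [cramer_apply, updateCol_transpose, det_transpose, hg, Pi.smul_apply, smul_eq_mul]
  have hgM : g ᵥ* M = f := by
    have := mulVec_cramer Mᵀ f
    rw [hcramer, mulVec_smul, det_transpose, mulVec_transpose] at this
    exact smul_right_injective _ hM this
  refine ⟨g, hgM, fun g' hg' => sub_eq_zero.mp (eq_zero_of_vecMul_eq_zero hM ?_)⟩
  rw [sub_vecMul, hg', hgM, sub_self]

end Matrix

lemma lin_eq_sumSMulX (a : Fin l → K) :
    lin a = sumSMulX (Finsupp.equivFunOnFinite.symm a) := by
  simp [sumSMulX, Finsupp.linearCombination_apply, Finsupp.sum_fintype, lin, smul_eq_C_mul]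

lemma coeff_lin (a : Fin l → K) (j : Fin l) : (lin a).coeff (Finsupp.single j 1) = a j := by
  simp [lin_eq_sumSMulX, coeff_sumSMulX]

lemma lin_injective : Function.Injective (lin : (Fin l → K) → MvPolynomial (Fin l) K) :=
  fun a b h => funext fun j => by rw [← coeff_lin a j, h, coeff_lin]

lemma lin_smul (r : K) (a : Fin l → K) : lin (r • a) = C r * lin a := by
  simp [lin, Finset.mul_sum, mul_assoc]

lemma irreducible_lin {a : Fin l → K} (ha : a ≠ 0) : Irreducible (lin a) := by
  obtain ⟨j, hj⟩ := Function.ne_iff.mp ha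
  rw [lin_eq_sumSMulX]
  exact irreducible_sumSMulX _ ⟨j, by simpa using hj⟩ fun r hr =>
    isUnit_of_dvd_unit (hr j) (by simpa using hj)

lemma exists_eq_smul_of_lin_dvd_lin {a b : Fin l → K} (ha : a ≠ 0) (hb : b ≠ 0)
    (h : lin a ∣ lin b) : ∃ r : K, b = r • a := by
  obtain ⟨u, hu⟩ := (irreducible_lin ha).associated_of_dvd (irreducible_lin hb) h
  obtain ⟨r, -, hr⟩ := isUnit_iff_eq_C_of_isReduced.mp u.isUnit
  exact ⟨r, lin_injective (by rw [lin_smul, ← hu, hr, mul_comm])⟩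

lemma isRelPrime_lin {a b : Fin l → K} (ha : a ≠ 0) (hb : b ≠ 0) (hab : ∀ r : K, b ≠ r • a) :
    IsRelPrime (lin a) (lin b) :=
  (irreducible_lin ha).isRelPrime_iff_not_dvd.mpr fun h =>
    (exists_eq_smul_of_lin_dvd_lin ha hb h).elim hab

lemma derApp_lin (f : Fin l → MvPolynomial (Fin l) K) (a : Fin l → K) :
    derApp f (lin a) = f ⬝ᵥ fun j => C (a j) := by
  simp [derApp, lin, dotProduct, Pi.single_apply]

lemma lin_dvd_det {a : Fin l → K} (ha : a ≠ 0)
    {N : Matrix (Fin l) (Fin l) (MvPolynomial (Fin l) K)}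
    (h : ∀ i, lin a ∣ derApp (N i) (lin a)) : lin a ∣ N.det := by
  obtain ⟨j, hj⟩ := Function.ne_iff.mp ha
  exact dvd_det_of_dvd_mulVec (j := j) (hj.isUnit.map C) fun i =>
    derApp_lin (N i) a ▸ h i

namespace IsArrangement

variable {α : Fin n → Fin l → K}

lemma prod_lin_dvd (hα : IsArrangement α) {p : MvPolynomial (Fin l) K}
    (h : ∀ k, lin (α k) ∣ p) : ∏ k, lin (α k) ∣ p :=
  Fintype.prod_dvd_of_isRelPrime
    (fun k k' hkk' => isRelPrime_lin (hα.1 k) (hα.1 k') (hα.2 k k' hkk')) h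

lemma prod_lin_dvd_det (hα : IsArrangement α)
    {N : Matrix (Fin l) (Fin l) (MvPolynomial (Fin l) K)} (hN : ∀ i, IsLogDer α (N i)) :
    ∏ k, lin (α k) ∣ N.det :=
  hα.prod_lin_dvd fun k => lin_dvd_det (hα.1 k) fun i => hN i k

end IsArrangement

/-- Saito's criterion: if `δ_1, …, δ_l ∈ D(A)` satisfy `det(δ_i(x_j)) = c · Q` for a
nonzero constant `c ∈ K`, then `δ_1, …, δ_l` are a free `S`-basis of `D(A)`: every
logarithmic vector field is a unique `S`-linear combination of the `δ_i`. -/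
theorem saito_criterion (α : Fin n → Fin l → K) (hα : IsArrangement α)
    (δ : Fin l → Fin l → MvPolynomial (Fin l) K) (hδ : ∀ i, IsLogDer α (δ i))
    (c : K) (hc : c ≠ 0)
    (hdet : (Matrix.of δ).det = MvPolynomial.C c * ∏ k, lin (α k)) :
    ∀ f : Fin l → MvPolynomial (Fin l) K, IsLogDer α f →
      ∃! g : Fin l → MvPolynomial (Fin l) K, f = fun j => ∑ i, g i * δ i j := by
  intro f hf
  have hCc : IsUnit (C c : MvPolynomial (Fin l) K) := hc.isUnit.map C
  have hdet_ne : (of δ).det ≠ 0 := by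
    rw [hdet]
    exact mul_ne_zero hCc.ne_zero
      (Finset.prod_ne_zero_iff.mpr fun k _ => (irreducible_lin (hα.1 k)).ne_zero)
  have hdet_dvd : ∀ i, (of δ).det ∣ ((of δ).updateRow i f).det := fun i => by
    rw [hdet, hCc.mul_left_dvd]
    refine hα.prod_lin_dvd_det fun i' => ?_
    rcases eq_or_ne i' i with rfl | hi
    · simpa using hf
    · rw [updateRow_ne hi]
      exact hδ i'
  exact existsUnique_congr (fun g => eq_comm) |>.mp
    (existsUnique_vecMul_eq_of_det_dvd hdet_ne hdet_dvd)

end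
end

section
/- The Möbius function of the intersection lattice of a central hyperplane arrangement alternates in sign: for every flat X ∈ L(A), (−1)^{rk(X)} μ(X) > 0. -/
/-!
If A is a finite hyperplane arrangement in F_q^l, then the number of points of
F_q^l lying on no hyperplane of A equals χ(A, q).
-/

open scoped Classical

noncomputable section

variable {K : Type*} [Field K] {l : ℕ}

section Aux

open Module Finset

variable {A : Finset (AffineSubspace K (Fin l → K))}
variable {μ : AffineSubspace K (Fin l → K) → ℤ}

lemma mem_sInf' {S : Set (AffineSubspace K (Fin l → K))} {x : Fin l → K}
    (h : ∀ s ∈ S, x ∈ s) : x ∈ sInf S :=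
  Set.mem_iInter₂.2 h

lemma flats_rep {X : AffineSubspace K (Fin l → K)} (hX : X ∈ flats ⊤ A) :
    ∃ B : Finset (AffineSubspace K (Fin l → K)), B ⊆ A ∧ X = sInf ↑B := by
  simp only [flats, Finset.mem_filter, Finset.mem_image] at hX
  obtain ⟨⟨B, hB, hXB⟩, -⟩ := hX
  simp only [Finset.bind_def, Finset.pure_def, Finset.mem_sup, Finset.mem_singleton,
    Finset.mem_powerset] at hB
  obtain ⟨C, hCA, rfl⟩ := hB
  exact ⟨C, hCA, by rw [← hXB, top_inf_eq]⟩

lemma zero_mem_sInf (hcentral : ∀ H ∈ A, (0 : Fin l → K) ∈ H)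
    {B : Finset (AffineSubspace K (Fin l → K))} (hB : B ⊆ A) :
    (0 : Fin l → K) ∈ sInf (↑B : Set (AffineSubspace K (Fin l → K))) :=
  mem_sInf' fun s hs => hcentral s (hB hs)

lemma sInf_mem_flats (hcentral : ∀ H ∈ A, (0 : Fin l → K) ∈ H)
    {B : Finset (AffineSubspace K (Fin l → K))} (hB : B ⊆ A) :
    sInf (↑B : Set (AffineSubspace K (Fin l → K))) ∈ flats ⊤ A := by
  simp only [flats, Finset.mem_filter, Finset.mem_image]
  refine ⟨⟨↑B, ?_, by rw [top_inf_eq]⟩, ⟨0, zero_mem_sInf hcentral hB⟩⟩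
  simp only [Finset.bind_def, Finset.pure_def, Finset.mem_sup, Finset.mem_singleton,
    Finset.mem_powerset]
  exact ⟨B, hB, rfl⟩

lemma zero_mem_flat (hcentral : ∀ H ∈ A, (0 : Fin l → K) ∈ H)
    {X : AffineSubspace K (Fin l → K)} (hX : X ∈ flats ⊤ A) : (0 : Fin l → K) ∈ X := by
  obtain ⟨B, hB, rfl⟩ := flats_rep hX
  exact zero_mem_sInf hcentral hB

lemma top_mem_flats (hcentral : ∀ H ∈ A, (0 : Fin l → K) ∈ H) :
    (⊤ : AffineSubspace K (Fin l → K)) ∈ flats ⊤ A := by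
  have h := sInf_mem_flats (A := A) hcentral (Finset.empty_subset A)
  simpa using h

lemma inf_mem_flats (hcentral : ∀ H ∈ A, (0 : Fin l → K) ∈ H)
    {X H : AffineSubspace K (Fin l → K)} (hX : X ∈ flats ⊤ A) (hH : H ∈ A) :
    X ⊓ H ∈ flats ⊤ A := by
  obtain ⟨B, hB, rfl⟩ := flats_rep hX
  have : sInf (↑B : Set (AffineSubspace K (Fin l → K))) ⊓ H
      = sInf (↑(insert H B) : Set (AffineSubspace K (Fin l → K))) := by
    rw [Finset.coe_insert, sInf_insert, inf_comm]
  rw [this]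
  exact sInf_mem_flats hcentral (Finset.insert_subset hH hB)

lemma finrank_lt_of_lt (hcentral : ∀ H ∈ A, (0 : Fin l → K) ∈ H)
    {X Y : AffineSubspace K (Fin l → K)} (hX : X ∈ flats ⊤ A) (h : X < Y) :
    finrank K X.direction < finrank K Y.direction := by
  have h0X : (0 : Fin l → K) ∈ X := zero_mem_flat hcentral hX
  have h0Y : (0 : Fin l → K) ∈ Y := h.le h0X
  have hdle : X.direction ≤ Y.direction := AffineSubspace.direction_le h.le
  have hdlt : X.direction < Y.direction := by
    rcases hdle.lt_or_eq with h' | h'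
    · exact h'
    · exact absurd ((AffineSubspace.eq_iff_direction_eq_of_mem h0X h0Y).mpr h') h.ne
  exact Submodule.finrank_lt_finrank_of_lt hdlt

lemma hyper_facts {H : AffineSubspace K (Fin l → K)} (h : IsHyperplane H)
    (h0 : (0 : Fin l → K) ∈ H) :
    H ≠ ⊤ ∧ l ≤ finrank K H.direction + 1 := by
  obtain ⟨f, hf, hset⟩ := h
  have hf0 : f 0 = 0 := by
    have h0' : (0 : Fin l → K) ∈ (H : Set (Fin l → K)) := h0
    rw [hset] at h0'; simpa using h0'
  have hfv : ∀ v, f v = f.linear v := by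
    intro v
    have h1 : f (v +ᵥ (0 : Fin l → K)) = f.linear v +ᵥ f 0 := f.map_vadd 0 v
    simpa [hf0] using h1
  constructor
  · obtain ⟨v, hv⟩ : ∃ v, f.linear v ≠ 0 := by
      by_contra h'
      push_neg at h'
      exact hf (LinearMap.ext fun v => by simpa using h' v)
    intro htop
    have hvH : v ∈ (H : Set (Fin l → K)) := by rw [htop]; trivial
    rw [hset] at hvH
    exact hv (by simpa [hfv v] using hvH)
  · have hker : LinearMap.ker f.linear ≤ H.direction := by
      intro w hw
      have hwH : w ∈ H := by
        rw [← AffineSubspace.mem_coe, hset]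
        simpa [hfv w] using LinearMap.mem_ker.mp hw
      simpa using AffineSubspace.vsub_mem_direction hwH h0
    have hkerrank : finrank K (LinearMap.ker f.linear) + 1 = l := by
      rw [Module.Dual.finrank_ker_add_one_of_ne_zero hf, Module.finrank_fin_fun]
    have := Submodule.finrank_mono hker
    omega

/-- The defining relation in summed form. -/
lemma sum_flats_ge_zero (hμ : IsMobius ⊤ A μ)
    {X : AffineSubspace K (Fin l → K)} (hX : X ∈ flats ⊤ A) (hne : X ≠ ⊤) :
    ∑ Y ∈ (flats ⊤ A).filter (fun Y => X ≤ Y), μ Y = 0 := by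
  have h2 := hμ.2 X hX hne
  have hXmem : X ∈ (flats ⊤ A).filter (fun Y => X ≤ Y) := by
    simp [Finset.mem_filter, hX]
  have herase : ((flats ⊤ A).filter (fun Y => X ≤ Y)).erase X
      = (flats ⊤ A).filter (fun Y => X < Y) := by
    ext Y
    simp only [Finset.mem_erase, Finset.mem_filter]
    constructor
    · rintro ⟨hne', hY, hle⟩
      exact ⟨hY, lt_of_le_of_ne hle (Ne.symm hne')⟩
    · rintro ⟨hY, hlt⟩
      exact ⟨hlt.ne', hY, hlt.le⟩
  have := Finset.add_sum_erase _ μ hXmem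
  rw [herase] at this
  omega

/-- Weisner's theorem in the intersection lattice. -/
lemma weisner (hA : ∀ H ∈ A, IsHyperplane H) (hcentral : ∀ H ∈ A, (0 : Fin l → K) ∈ H)
    (hμ : IsMobius ⊤ A μ) {H₀ : AffineSubspace K (Fin l → K)} (hH₀ : H₀ ∈ A) :
    ∀ n (U : AffineSubspace K (Fin l → K)), U ∈ flats ⊤ A → U ≤ H₀ →
      l - finrank K U.direction = n →
      ∑ Y ∈ (flats ⊤ A).filter (fun Y => Y ⊓ H₀ = U), μ Y = 0 := by
  intro n
  induction n using Nat.strong_induction_on with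
  | _ n ih =>
    intro U hU hUH hn
    have hH₀top : H₀ ≠ ⊤ := (hyper_facts (hA H₀ hH₀) (hcentral H₀ hH₀)).1
    have hUtop : U ≠ ⊤ := fun h => hH₀top (top_le_iff.mp (h ▸ hUH))
    -- partition the flats containing U by their intersection with H₀
    have hmaps : ∀ Y ∈ (flats ⊤ A).filter (fun Y => U ≤ Y),
        Y ⊓ H₀ ∈ (flats ⊤ A).filter (fun W => U ≤ W ∧ W ≤ H₀) := by
      intro Y hY
      rw [Finset.mem_filter] at hY ⊢
      exact ⟨inf_mem_flats hcentral hY.1 hH₀, le_inf hY.2 hUH, inf_le_right⟩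
    have hfib := Finset.sum_fiberwise_of_maps_to hmaps μ
    rw [sum_flats_ge_zero hμ hU hUtop] at hfib
    -- identify the fibers
    have hfibeq : ∀ W ∈ (flats ⊤ A).filter (fun W => U ≤ W ∧ W ≤ H₀),
        ∑ Y ∈ ((flats ⊤ A).filter (fun Y => U ≤ Y)).filter (fun Y => Y ⊓ H₀ = W), μ Y
          = ∑ Y ∈ (flats ⊤ A).filter (fun Y => Y ⊓ H₀ = W), μ Y := by
      intro W hW
      rw [Finset.mem_filter] at hW
      congr 1
      rw [Finset.filter_filter]
      apply Finset.filter_congr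
      intro Y _
      simp only [and_iff_right_iff_imp]
      intro hYW
      exact le_trans (le_trans hW.2.1 (hYW ▸ inf_le_left)) le_rfl
    rw [Finset.sum_congr rfl hfibeq] at hfib
    -- split off the term W = U
    have hUmem : U ∈ (flats ⊤ A).filter (fun W => U ≤ W ∧ W ≤ H₀) := by
      rw [Finset.mem_filter]; exact ⟨hU, le_rfl, hUH⟩
    have hsplit := Finset.add_sum_erase _
      (fun W => ∑ Y ∈ (flats ⊤ A).filter (fun Y => Y ⊓ H₀ = W), μ Y) hUmem
    rw [hfib] at hsplit
    -- all other terms vanish by induction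
    have hzero : ∀ W ∈ ((flats ⊤ A).filter (fun W => U ≤ W ∧ W ≤ H₀)).erase U,
        ∑ Y ∈ (flats ⊤ A).filter (fun Y => Y ⊓ H₀ = W), μ Y = 0 := by
      intro W hW
      rw [Finset.mem_erase, Finset.mem_filter] at hW
      obtain ⟨hWU, hWf, hUW, hWH⟩ := hW
      have hlt : U < W := lt_of_le_of_ne hUW (Ne.symm hWU)
      have hdim := finrank_lt_of_lt hcentral hU hlt
      have hWle : finrank K W.direction ≤ l := by
        have := Submodule.finrank_le W.direction
        rwa [Module.finrank_fin_fun] at this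
      exact ih (l - finrank K W.direction) (by omega) W hWf hWH rfl
    rw [Finset.sum_eq_zero hzero, add_zero] at hsplit
    exact hsplit

end Aux

/-- The Möbius function of the intersection lattice of a central arrangement alternates
in sign: `(-1)^{rk X} μ(X) > 0` for every flat `X`, where `rk X = codim X`. -/
theorem mobius_alternates {K : Type*} [Field K] {l : ℕ}
    (A : Finset (AffineSubspace K (Fin l → K))) (hA : ∀ H ∈ A, IsHyperplane H)
    (hcentral : ∀ H ∈ A, (0 : Fin l → K) ∈ H)
    (μ : AffineSubspace K (Fin l → K) → ℤ) (hμ : IsMobius ⊤ A μ) :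
    ∀ X ∈ flats ⊤ A, 0 < (-1) ^ (l - Module.finrank K X.direction) * μ X := by
  suffices key : ∀ n (X : AffineSubspace K (Fin l → K)), X ∈ flats ⊤ A →
      l - Module.finrank K X.direction = n → 0 < (-1) ^ n * μ X by
    intro X hX
    exact key _ X hX rfl
  intro n
  induction n using Nat.strong_induction_on with
  | _ n ih =>
    intro X hX hn
    by_cases htop : X = ⊤
    · subst htop
      have hd : Module.finrank K (⊤ : AffineSubspace K (Fin l → K)).direction = l := by
        rw [AffineSubspace.direction_top, finrank_top, Module.finrank_fin_fun]
      rw [hd, Nat.sub_self] at hn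
      rw [← hn, pow_zero, one_mul, hμ.1]
      norm_num
    · obtain ⟨B, hBA, hXB⟩ := flats_rep hX
      -- choose a minimal C ⊆ B with sInf C = X
      have hPne : (B.powerset.filter
          (fun C : Finset (AffineSubspace K (Fin l → K)) =>
            sInf (C : Set (AffineSubspace K (Fin l → K))) = X)).Nonempty :=
        ⟨B, by simp [hXB.symm]⟩
      obtain ⟨C, hCP, hCmin⟩ := Finset.exists_min_image _ Finset.card hPne
      rw [Finset.mem_filter, Finset.mem_powerset] at hCP
      obtain ⟨hCB, hCX⟩ := hCP
      have hCne : C.Nonempty := by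
        rcases C.eq_empty_or_nonempty with rfl | h
        · exact absurd (by simpa using hCX.symm) htop
        · exact h
      obtain ⟨H₀, hH₀C⟩ := hCne
      have hH₀A : H₀ ∈ A := hBA (hCB hH₀C)
      have hXH₀ : X ≤ H₀ := by
        rw [← hCX]
        exact sInf_le (by exact_mod_cast hH₀C)
      have h0H₀ : (0 : Fin l → K) ∈ H₀ := hcentral H₀ hH₀A
      have hH₀facts := hyper_facts (hA H₀ hH₀A) h0H₀
      -- the witness flat Y₀
      have hC'A : C.erase H₀ ⊆ A := fun x hx => hBA (hCB (Finset.erase_subset _ _ hx))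
      have hY₀flat : sInf (↑(C.erase H₀) : Set (AffineSubspace K (Fin l → K))) ∈ flats ⊤ A :=
        sInf_mem_flats hcentral hC'A
      have hY₀inf : sInf (↑(C.erase H₀) : Set (AffineSubspace K (Fin l → K))) ⊓ H₀ = X := by
        rw [inf_comm, ← sInf_insert, ← Finset.coe_insert, Finset.insert_erase hH₀C, hCX]
      have hY₀ne : sInf (↑(C.erase H₀) : Set (AffineSubspace K (Fin l → K))) ≠ X := by
        intro h
        have hmem : C.erase H₀ ∈ B.powerset.filter
            (fun C : Finset (AffineSubspace K (Fin l → K)) =>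
              sInf (C : Set (AffineSubspace K (Fin l → K))) = X) := by
          rw [Finset.mem_filter, Finset.mem_powerset]
          exact ⟨fun x hx => hCB (Finset.erase_subset _ _ hx), h⟩
        have := hCmin _ hmem
        have hcard : (C.erase H₀).card < C.card := Finset.card_erase_lt_of_mem hH₀C
        omega
      -- Weisner
      have hW := weisner hA hcentral hμ hH₀A (l - Module.finrank K X.direction) X hX hXH₀ rfl
      have hXS : X ∈ (flats ⊤ A).filter (fun Y => Y ⊓ H₀ = X) := by
        rw [Finset.mem_filter]
        exact ⟨hX, inf_eq_left.mpr hXH₀⟩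
      have hsplit := Finset.add_sum_erase _ μ hXS
      rw [hW] at hsplit
      -- the erased set is nonempty
      have hY₀mem : sInf (↑(C.erase H₀) : Set (AffineSubspace K (Fin l → K))) ∈
          ((flats ⊤ A).filter (fun Y => Y ⊓ H₀ = X)).erase X := by
        rw [Finset.mem_erase, Finset.mem_filter]
        exact ⟨hY₀ne, hY₀flat, hY₀inf⟩
      -- dimension facts for members of the erased set
      have hdim : ∀ Y ∈ ((flats ⊤ A).filter (fun Y => Y ⊓ H₀ = X)).erase X,
          Module.finrank K Y.direction = Module.finrank K X.direction + 1 ∧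
            Module.finrank K Y.direction ≤ l := by
        intro Y hY
        rw [Finset.mem_erase, Finset.mem_filter] at hY
        obtain ⟨hYne, hYfl, hYinf⟩ := hY
        have hXY : X < Y := lt_of_le_of_ne (hYinf ▸ inf_le_left) (Ne.symm hYne)
        have hd1 : Module.finrank K X.direction < Module.finrank K Y.direction :=
          finrank_lt_of_lt hcentral hX hXY
        have h0Y : (0 : Fin l → K) ∈ Y := zero_mem_flat hcentral hYfl
        have hXdir : X.direction = Y.direction ⊓ H₀.direction := by
          rw [← hYinf]
          exact AffineSubspace.direction_inf_of_mem h0Y h0H₀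
        have hsum := Submodule.finrank_sup_add_finrank_inf_eq Y.direction H₀.direction
        have hsup : Module.finrank K ↥(Y.direction ⊔ H₀.direction) ≤ l := by
          have := Submodule.finrank_le (Y.direction ⊔ H₀.direction)
          rwa [Module.finrank_fin_fun] at this
        have hYle : Module.finrank K Y.direction ≤ l := by
          have := Submodule.finrank_le Y.direction
          rwa [Module.finrank_fin_fun] at this
        rw [← hXdir] at hsum
        have hH₀d := hH₀facts.2
        constructor
        · omega
        · exact hYle
      -- n ≥ 1
      have hXlt : X < ⊤ := lt_of_le_of_ne le_top htop
      have hdX : Module.finrank K X.direction < l := by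
        have := finrank_lt_of_lt hcentral hX hXlt
        rwa [AffineSubspace.direction_top, finrank_top, Module.finrank_fin_fun] at this
      have hn1 : n = (n - 1) + 1 := by omega
      -- each term is positive
      have hpos : ∀ Y ∈ ((flats ⊤ A).filter (fun Y => Y ⊓ H₀ = X)).erase X,
          0 < (-1 : ℤ) ^ (n - 1) * μ Y := by
        intro Y hY
        have hd := hdim Y hY
        have hYfl : Y ∈ flats ⊤ A := by
          rw [Finset.mem_erase, Finset.mem_filter] at hY
          exact hY.2.1
        have : l - Module.finrank K Y.direction = n - 1 := by omega
        exact ih (n - 1) (by omega) Y hYfl this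
      have hsumpos : 0 < ∑ Y ∈ ((flats ⊤ A).filter (fun Y => Y ⊓ H₀ = X)).erase X,
          (-1 : ℤ) ^ (n - 1) * μ Y :=
        Finset.sum_pos hpos ⟨_, hY₀mem⟩
      rw [← Finset.mul_sum] at hsumpos
      have hμX : μ X = -∑ Y ∈ ((flats ⊤ A).filter (fun Y => Y ⊓ H₀ = X)).erase X, μ Y := by
        omega
      rw [hμX, hn1, pow_succ]
      nlinarith [hsumpos]


end
end
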